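/- With l^{(k)} as above satisfying σ l^{(k)} = l^{(k)} + l^{(k-1)}, for each k ≥ 1 there is a short exact sequence 0 → ℂ → K_k[l] → K_{k-1}[l] → 0 where the middle map is σ_q - 1 and K_k[l] denotes polynomials in l over K of degree ≤ k. -/

import Mathlib

/-!
Since `‖q‖ > 1`, `qⁿ ≠ 1` for `n ≠ 0`, so on `K` the operator `σ_q - 1` kills exactly the
constants and maps onto the series without constant term. On `Σ f i · l^{(i)}` the constant term
of the `i`-th coordinate of the image is the constant term of `f (i + 1)`; both exactness claims
follow by working down from the top coordinate.
-/

/-- The `q`-dilation operator on formal Laurent series, sending `Σ aₙ zⁿ` to `Σ aₙ qⁿ zⁿ`,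
i.e. `f(z) ↦ f(qz)`. -/
noncomputable def sigmaq (q : ℂ) (f : LaurentSeries ℂ) : LaurentSeries ℂ :=
  ⟨fun n => q ^ n * f.coeff n, f.isPWO_support'.mono (fun n hn => by
    simp only [Function.mem_support] at hn ⊢
    exact fun h => hn (by rw [h, mul_zero]))⟩

lemma zpow_ne_one_of_one_lt_norm {𝕜 : Type*} [NormedDivisionRing 𝕜] {q : 𝕜} (hq : 1 < ‖q‖)
    {n : ℤ} (hn : n ≠ 0) : q ^ n ≠ 1 := fun h =>
  hn <| (zpow_eq_one_iff_right₀ (norm_nonneg q) hq.ne').mp (by rw [← norm_zpow, h, norm_one])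

section Dilation

variable {q : ℂ}

@[simp]
lemma sigmaq_coeff (q : ℂ) (f : LaurentSeries ℂ) (n : ℤ) :
    (sigmaq q f).coeff n = q ^ n * f.coeff n := rfl

lemma sigmaq_add (q : ℂ) (f g : LaurentSeries ℂ) :
    sigmaq q (f + g) = sigmaq q f + sigmaq q g := by
  ext n
  simp [mul_add]

@[simp]
lemma sigmaq_zero (q : ℂ) : sigmaq q 0 = 0 := by
  ext n
  simp

lemma sigmaq_coeff_zero (q : ℂ) (f : LaurentSeries ℂ) : (sigmaq q f).coeff 0 = f.coeff 0 := by
  simp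

@[simp]
lemma sigmaq_single_zero (q c : ℂ) :
    sigmaq q (HahnSeries.single 0 c) = HahnSeries.single 0 c := by
  ext n
  rcases eq_or_ne n 0 with rfl | hn <;> simp [*]

lemma sigmaq_eq_self_iff (hq : ∀ n : ℤ, n ≠ 0 → q ^ n ≠ 1) {f : LaurentSeries ℂ} :
    sigmaq q f = f ↔ f = HahnSeries.single 0 (f.coeff 0) := by
  refine ⟨fun hf => ?_, fun hf => by rw [hf, sigmaq_single_zero]⟩
  ext n
  rcases eq_or_ne n 0 with rfl | hn
  · simp
  have hfix : q ^ n * f.coeff n = f.coeff n := by rw [← sigmaq_coeff, hf]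
  have hcoeff : f.coeff n = 0 :=
    (mul_eq_zero.mp (by linear_combination hfix : (q ^ n - 1) * f.coeff n = 0)).resolve_left
      (sub_ne_zero.mpr (hq n hn))
  simp [hn, hcoeff]

/-- At `n = 0` the junk value `0⁻¹ = 0` kills the constant term, so this inverts `σ_q - 1` on
series without constant term. -/
noncomputable def sigmaqSubOneInv (q : ℂ) (h : LaurentSeries ℂ) : LaurentSeries ℂ :=
  ⟨fun n => (q ^ n - 1)⁻¹ * h.coeff n,
    h.isPWO_support'.mono (Function.support_mul_subset_right _ _)⟩

lemma sigmaqSubOneInv_coeff_zero (q : ℂ) (h : LaurentSeries ℂ) :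
    (sigmaqSubOneInv q h).coeff 0 = 0 := by
  simp [sigmaqSubOneInv]

lemma sigmaq_sub_self_sigmaqSubOneInv (hq : ∀ n : ℤ, n ≠ 0 → q ^ n ≠ 1)
    {h : LaurentSeries ℂ} (h0 : h.coeff 0 = 0) :
    sigmaq q (sigmaqSubOneInv q h) - sigmaqSubOneInv q h = h := by
  ext n
  rcases eq_or_ne n 0 with rfl | hn
  · simp [sigmaqSubOneInv, h0]
  · have : q ^ n - 1 ≠ 0 := sub_ne_zero.mpr (hq n hn)
    simp only [HahnSeries.coeff_sub, sigmaq_coeff, sigmaqSubOneInv]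
    field_simp

lemma exists_sigmaq_sub_self_eq (hq : ∀ n : ℤ, n ≠ 0 → q ^ n ≠ 1)
    {h : LaurentSeries ℂ} (h0 : h.coeff 0 = 0) (c : ℂ) :
    ∃ u : LaurentSeries ℂ, u.coeff 0 = c ∧ sigmaq q u - u = h := by
  refine ⟨sigmaqSubOneInv q h + HahnSeries.single 0 c, by simp [sigmaqSubOneInv_coeff_zero], ?_⟩
  rw [sigmaq_add, sigmaq_single_zero, add_sub_add_right_eq_sub,
    sigmaq_sub_self_sigmaqSubOneInv hq h0]

end Dilation

section LogarithmicExtension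

/-- `σ_q - 1` on `K[l]`, in the coordinates `f i` of an element `Σ f i · l^{(i)}`. -/
noncomputable def sigmaqSubOneLog (q : ℂ) (f : ℕ → LaurentSeries ℂ) (i : ℕ) :
    LaurentSeries ℂ :=
  sigmaq q (f i) - f i + sigmaq q (f (i + 1))

variable {q : ℂ}

lemma sigmaqSubOneLog_coeff_zero (q : ℂ) (f : ℕ → LaurentSeries ℂ) (i : ℕ) :
    (sigmaqSubOneLog q f i).coeff 0 = (f (i + 1)).coeff 0 := by
  simp [sigmaqSubOneLog]

lemma sigmaqSubOneLog_const (q c : ℂ) (i : ℕ) :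
    sigmaqSubOneLog q (fun i => if i = 0 then HahnSeries.single 0 c else 0) i = 0 := by
  rcases i with _ | i <;> simp [sigmaqSubOneLog]

/-- In the kernel, `f (i + 2) = 0` forces `f (i + 1)` to be a constant, which is the constant
term of `sigmaqSubOneLog q f i = 0`. -/
lemma eq_zero_of_sigmaqSubOneLog_eq_zero_of_succ (hq : ∀ n : ℤ, n ≠ 0 → q ^ n ≠ 1)
    {f : ℕ → LaurentSeries ℂ} (hf : ∀ i, sigmaqSubOneLog q f i = 0) {i : ℕ}
    (hi : f (i + 2) = 0) : f (i + 1) = 0 := by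
  have hfix : sigmaq q (f (i + 1)) = f (i + 1) := by
    simpa [sigmaqSubOneLog, hi, sub_eq_zero] using hf (i + 1)
  have hconst : (f (i + 1)).coeff 0 = 0 := by
    rw [← sigmaqSubOneLog_coeff_zero, hf, HahnSeries.coeff_zero]
  rw [(sigmaq_eq_self_iff hq).mp hfix, hconst, HahnSeries.single_eq_zero]

lemma sigmaqSubOneLog_eq_zero_iff (hq : ∀ n : ℤ, n ≠ 0 → q ^ n ≠ 1) {k : ℕ}
    {f : ℕ → LaurentSeries ℂ} (hf : ∀ i, k < i → f i = 0) :
    (∀ i, sigmaqSubOneLog q f i = 0) ↔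
      ∃ c : ℂ, f = fun i => if i = 0 then HahnSeries.single 0 c else 0 := by
  refine ⟨fun hker => ?_, fun ⟨c, hc⟩ i => hc ▸ sigmaqSubOneLog_const q c i⟩
  have hpos : ∀ n i, k < i + 1 + n → f (i + 1) = 0 := by
    intro n
    induction n with
    | zero => exact fun i hi => hf _ hi
    | succ n ih =>
      exact fun i hi => eq_zero_of_sigmaqSubOneLog_eq_zero_of_succ hq hker (ih (i + 1) (by omega))
  have hfix : sigmaq q (f 0) = f 0 := by
    simpa [sigmaqSubOneLog, hpos k 0 (by omega), sub_eq_zero] using hker 0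
  refine ⟨(f 0).coeff 0, funext fun i => ?_⟩
  rcases i with _ | i
  · exact (sigmaq_eq_self_iff hq).mp hfix
  · exact hpos k i (by omega)

/-- Prescribing the constant term `c` of `f 0` is the strengthening that makes the induction
work: one level up, it has to match the constant term of `g 0`. -/
lemma exists_sigmaqSubOneLog_eq (hq : ∀ n : ℤ, n ≠ 0 → q ^ n ≠ 1) (k : ℕ)
    {g : ℕ → LaurentSeries ℂ} (hg : ∀ i, k ≤ i → g i = 0) (c : ℂ) :
    ∃ f : ℕ → LaurentSeries ℂ, (∀ i, k < i → f i = 0) ∧ (f 0).coeff 0 = c ∧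
      ∀ i, sigmaqSubOneLog q f i = g i := by
  induction k generalizing g c with
  | zero =>
    refine ⟨fun i => if i = 0 then HahnSeries.single 0 c else 0, fun i hi => ?_, by simp,
      fun i => ?_⟩
    · simp [Nat.pos_iff_ne_zero.mp hi]
    · rw [sigmaqSubOneLog_const, hg i (Nat.zero_le i)]
  | succ k ih =>
    obtain ⟨f, hf, hf0, hfg⟩ := ih (g := fun i => g (i + 1)) (fun i hi => hg _ (by omega))
      ((g 0).coeff 0)
    have hrhs : (g 0 - sigmaq q (f 0)).coeff 0 = 0 := by
      rw [HahnSeries.coeff_sub, sigmaq_coeff_zero, hf0, sub_self]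
    obtain ⟨u, hu0, hu⟩ := exists_sigmaq_sub_self_eq hq hrhs c
    refine ⟨fun | 0 => u | i + 1 => f i, fun i hi => ?_, hu0, fun i => ?_⟩
    · obtain ⟨i, rfl⟩ := Nat.exists_eq_add_of_lt hi
      exact hf _ (by omega)
    · rcases i with _ | i
      · simp only [sigmaqSubOneLog, hu, sub_add_cancel]
      · exact hfg i

end LogarithmicExtension

theorem stmt_14 (q : ℂ) (hq : 1 < ‖q‖) (k : ℕ) (hk : 1 ≤ k) :
    -- Elements of `K_k[l_q]` are represented by their coordinates `f i ∈ K` in the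
    -- basis `l_q^{(i)}`, `0 ≤ i ≤ k`; the operator `σ_q - 1` acts by
    -- `(f i) ↦ (σ_q (f i) - f i + σ_q (f (i+1)))`.
    -- Kernel = the constants ℂ:
    (∀ f : ℕ → LaurentSeries ℂ, (∀ i, k < i → f i = 0) →
      ((∀ i, sigmaq q (f i) - f i + sigmaq q (f (i + 1)) = 0) ↔
        ∃ c : ℂ, f = fun i => if i = 0 then HahnSeries.single (0 : ℤ) c else 0)) ∧
    -- Image = `K_{k-1}[l_q]`:
    (∀ g : ℕ → LaurentSeries ℂ, (∀ i, k - 1 < i → g i = 0) →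
      ∃ f : ℕ → LaurentSeries ℂ, (∀ i, k < i → f i = 0) ∧
        ∀ i, sigmaq q (f i) - f i + sigmaq q (f (i + 1)) = g i) := by
  have hroot : ∀ n : ℤ, n ≠ 0 → q ^ n ≠ 1 := fun n => zpow_ne_one_of_one_lt_norm hq
  refine ⟨fun f hf => sigmaqSubOneLog_eq_zero_iff hroot hf, fun g hg => ?_⟩
  obtain ⟨f, hf, -, hfg⟩ := exists_sigmaqSubOneLog_eq hroot k (fun i hi => hg i (by omega)) 0
  exact ⟨f, hf, hfg⟩
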